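/- For an irrational x₀ ∈ (0,1), for all n ≥ 1 the Dajani–Kraaikamp identity holds: θₙ₊₁ = θₙ₋₁ + aₙ₊₁√(1 − 4θₙ₋₁θₙ) − aₙ₊₁²θₙ, where aₙ₊₁ is the (n+1)-th continued fraction digit. -/

import Mathlib

/-!
Write `xₙ = Tⁿ x₀` and `Pₙ = x₀ x₁ ⋯ xₙ`. From `xₙ xₙ₊₁ = 1 - aₙ₊₁ xₙ` and the recursions for
`pₙ, qₙ` one gets `qₙ x₀ - pₙ = (-1)ⁿ Pₙ` and `Pₙ (qₙ₊₁ + qₙ xₙ₊₁) = 1`, so `θₙ = qₙ Pₙ`.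
The second identity makes `1 - 4 θₙ₋₁ θₙ` the perfect square `((qₙ - qₙ₋₁ xₙ) Pₙ₋₁)²`, and the
Dajani–Kraaikamp identity becomes a polynomial identity in `qₙ₋₁, qₙ, Pₙ₋₁, xₙ, aₙ₊₁`.
-/

noncomputable section

open Real

/-- The Gauss map `T x = 1/x - ⌊1/x⌋`. -/
def gauss (x : ℝ) : ℝ := 1 / x - ⌊1 / x⌋

/-- The future of `x₀` at time `n`: `xₙ = Tⁿ x₀`. -/
def fut (x₀ : ℝ) (n : ℕ) : ℝ := gauss^[n] x₀

/-- The `n`-th partial quotient (digit) of `x₀` (meaningful for `n ≥ 1`):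
`aₙ = ⌊1/xₙ₋₁⌋`. -/
def digit (x₀ : ℝ) (n : ℕ) : ℤ := ⌊1 / fut x₀ (n - 1)⌋

/-- Numerators of the continued fraction convergents of `x₀ ∈ (0,1)`. -/
def num (x₀ : ℝ) : ℕ → ℤ
  | 0 => 0
  | 1 => 1
  | (n + 2) => digit x₀ (n + 2) * num x₀ (n + 1) + num x₀ n

/-- Denominators of the continued fraction convergents of `x₀ ∈ (0,1)`. -/
def den (x₀ : ℝ) : ℕ → ℤ
  | 0 => 1
  | 1 => digit x₀ 1
  | (n + 2) => digit x₀ (n + 2) * den x₀ (n + 1) + den x₀ n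

/-- The `n`-th approximation coefficient `θₙ = qₙ² |x₀ - pₙ/qₙ|`. -/
def theta (x₀ : ℝ) (n : ℕ) : ℝ :=
  (den x₀ n : ℝ) ^ 2 * |x₀ - (num x₀ n : ℝ) / (den x₀ n : ℝ)|

/-- Finite continued fraction `[b₁,...,bₖ] = 1/(b₁ + 1/(⋯ + 1/bₖ))`, with `[∅] = 0`. -/
def fcf : List ℝ → ℝ
  | [] => 0
  | (b :: bs) => 1 / (b + fcf bs)

/-- The past of `x₀` at time `n ≥ 1`: `yₙ = -aₙ - [aₙ₋₁, aₙ₋₂, ..., a₁]`. -/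
def past (x₀ : ℝ) (n : ℕ) : ℝ :=
  -(digit x₀ n : ℝ) -
    fcf (((List.range (n - 1)).map fun i => ((digit x₀ (n - 1 - i) : ℤ) : ℝ)))

/-- The domain `Ω = (0,1) × (-∞,-1)`. -/
def Omega : Set (ℝ × ℝ) := Set.Ioo (0 : ℝ) 1 ×ˢ Set.Iio (-1 : ℝ)

/-- The open triangle `Γ` with vertices `(0,0)`, `(1,0)`, `(0,1)`. -/
def Gam : Set (ℝ × ℝ) := {p | 0 < p.1 ∧ 0 < p.2 ∧ p.1 + p.2 < 1}

/-- The map `Ψ(x,y) = (1/(x-y), -xy/(x-y))`. -/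
def Psi (p : ℝ × ℝ) : ℝ × ℝ := (1 / (p.1 - p.2), -(p.1 * p.2) / (p.1 - p.2))

/-- The map `Φ(u,v) = ((1-√(1-4uv))/(2u), -(1+√(1-4uv))/(2u))`. -/
def Phi (p : ℝ × ℝ) : ℝ × ℝ :=
  ((1 - Real.sqrt (1 - 4 * p.1 * p.2)) / (2 * p.1),
   -((1 + Real.sqrt (1 - 4 * p.1 * p.2)) / (2 * p.1)))

/-- The natural extension map `𝒯(x,y) = (1/x - ⌊1/x⌋, 1/y - ⌊1/x⌋)`. -/
def natExt (p : ℝ × ℝ) : ℝ × ℝ := (1 / p.1 - ⌊1 / p.1⌋, 1 / p.2 - ⌊1 / p.1⌋)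

open Finset

lemma irrational_gauss {x : ℝ} (hx : Irrational x) : Irrational (gauss x) := by
  rw [gauss, one_div]
  exact hx.inv.sub_intCast _

lemma gauss_pos {x : ℝ} (hx : Irrational x) : 0 < gauss x :=
  (Int.fract_nonneg (1 / x)).lt_of_ne' (irrational_gauss hx).ne_zero

lemma fut_zero (x₀ : ℝ) : fut x₀ 0 = x₀ := rfl

lemma fut_succ (x₀ : ℝ) (n : ℕ) : fut x₀ (n + 1) = gauss (fut x₀ n) :=
  Function.iterate_succ_apply' _ _ _

lemma fut_succ_eq (x₀ : ℝ) (n : ℕ) :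
    fut x₀ (n + 1) = 1 / fut x₀ n - digit x₀ (n + 1) := by
  rw [fut_succ, gauss, digit, Nat.add_sub_cancel]

lemma irrational_fut {x₀ : ℝ} (hirr : Irrational x₀) (n : ℕ) : Irrational (fut x₀ n) := by
  induction n with
  | zero => exact hirr
  | succ n ih => rw [fut_succ]; exact irrational_gauss ih

lemma fut_mem_Ioo {x₀ : ℝ} (hx : x₀ ∈ Set.Ioo (0:ℝ) 1) (hirr : Irrational x₀) (n : ℕ) :
    fut x₀ n ∈ Set.Ioo (0:ℝ) 1 := by
  cases n with
  | zero => exact hx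
  | succ n =>
    rw [fut_succ]
    exact ⟨gauss_pos (irrational_fut hirr n), Int.fract_lt_one _⟩

lemma fut_mul_fut_succ {x₀ : ℝ} (hirr : Irrational x₀) (n : ℕ) :
    fut x₀ n * fut x₀ (n + 1) = 1 - digit x₀ (n + 1) * fut x₀ n := by
  have : fut x₀ n ≠ 0 := (irrational_fut hirr n).ne_zero
  rw [fut_succ_eq]
  field_simp

lemma one_le_digit {x₀ : ℝ} (hx : x₀ ∈ Set.Ioo (0:ℝ) 1) (hirr : Irrational x₀) (n : ℕ) :
    1 ≤ digit x₀ (n + 1) := by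
  obtain ⟨h0, h1⟩ := fut_mem_Ioo hx hirr n
  rw [digit, Nat.add_sub_cancel, Int.le_floor, Int.cast_one, le_div_iff₀ h0, one_mul]
  exact h1.le

lemma den_le_den_succ {x₀ : ℝ} (hx : x₀ ∈ Set.Ioo (0:ℝ) 1) (hirr : Irrational x₀) (n : ℕ) :
    den x₀ n ≤ den x₀ (n + 1) := by
  suffices ∀ n, 0 ≤ den x₀ n ∧ den x₀ n ≤ den x₀ (n + 1) from (this n).2
  intro n
  induction n with
  | zero => exact ⟨zero_le_one, one_le_digit hx hirr 0⟩
  | succ n ih =>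
    obtain ⟨h0, hle⟩ := ih
    have ha := one_le_digit hx hirr (n + 1)
    refine ⟨h0.trans hle, ?_⟩
    show den x₀ (n + 1) ≤ digit x₀ (n + 2) * den x₀ (n + 1) + den x₀ n
    nlinarith

lemma one_le_den {x₀ : ℝ} (hx : x₀ ∈ Set.Ioo (0:ℝ) 1) (hirr : Irrational x₀) (n : ℕ) :
    1 ≤ den x₀ n :=
  monotone_nat_of_le_succ (den_le_den_succ hx hirr) (Nat.zero_le n)

lemma den_mul_sub_num {x₀ : ℝ} (hirr : Irrational x₀) :
    ∀ n : ℕ, (den x₀ n : ℝ) * x₀ - num x₀ n = (-1) ^ n * ∏ i ∈ range (n + 1), fut x₀ i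
  | 0 => by simp [den, num, fut]
  | 1 => by
    have := fut_mul_fut_succ hirr 0
    rw [fut_zero] at this
    rw [prod_range_succ, prod_range_one, fut_zero]
    simp only [den, num, Int.cast_one]
    linear_combination this
  | n + 2 => by
    have h₀ := den_mul_sub_num hirr n
    have h₁ := den_mul_sub_num hirr (n + 1)
    have hx := fut_mul_fut_succ hirr (n + 1)
    simp only [den, num, Int.cast_add, Int.cast_mul]
    rw [prod_range_succ] at h₁
    rw [prod_range_succ, prod_range_succ]
    linear_combination (digit x₀ (n + 2) : ℝ) * h₁ + h₀ -
      (-1) ^ n * (∏ i ∈ range (n + 1), fut x₀ i) * hx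

lemma prod_fut_mul_den_add {x₀ : ℝ} (hirr : Irrational x₀) (n : ℕ) :
    (∏ i ∈ range (n + 1), fut x₀ i) * (den x₀ (n + 1) + den x₀ n * fut x₀ (n + 1)) = 1 := by
  induction n with
  | zero =>
    have := fut_mul_fut_succ hirr 0
    simp only [den, zero_add, range_one, prod_singleton, Int.cast_one] at this ⊢
    linear_combination this
  | succ n ih =>
    have hx := fut_mul_fut_succ hirr (n + 1)
    rw [prod_range_succ]
    simp only [den, Int.cast_add, Int.cast_mul] at ih ⊢
    linear_combination ih + (den x₀ (n + 1) : ℝ) * (∏ i ∈ range (n + 1), fut x₀ i) * hx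

lemma prod_fut_pos {x₀ : ℝ} (hx : x₀ ∈ Set.Ioo (0:ℝ) 1) (hirr : Irrational x₀) (n : ℕ) :
    0 < ∏ i ∈ range (n + 1), fut x₀ i :=
  prod_pos fun i _ => (fut_mem_Ioo hx hirr i).1

lemma theta_eq_den_mul_prod {x₀ : ℝ} (hx : x₀ ∈ Set.Ioo (0:ℝ) 1) (hirr : Irrational x₀) (n : ℕ) :
    theta x₀ n = den x₀ n * ∏ i ∈ range (n + 1), fut x₀ i := by
  have hq : (0:ℝ) < den x₀ n := by exact_mod_cast one_le_den hx hirr n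
  have : x₀ - num x₀ n / den x₀ n = (den x₀ n * x₀ - num x₀ n) / den x₀ n := by field_simp
  rw [theta, this, den_mul_sub_num hirr, abs_div, abs_mul, abs_pow, abs_neg, abs_one, one_pow,
    one_mul, abs_of_pos (prod_fut_pos hx hirr n), abs_of_pos hq]
  field_simp

lemma sqrt_one_sub_four_mul_theta {x₀ : ℝ} (hx : x₀ ∈ Set.Ioo (0:ℝ) 1) (hirr : Irrational x₀)
    (n : ℕ) :
    √(1 - 4 * theta x₀ n * theta x₀ (n + 1)) =
      (den x₀ (n + 1) - den x₀ n * fut x₀ (n + 1)) * ∏ i ∈ range (n + 1), fut x₀ i := by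
  set P := ∏ i ∈ range (n + 1), fut x₀ i
  set t := fut x₀ (n + 1)
  have hnonneg : 0 ≤ (den x₀ (n + 1) - den x₀ n * t) * P := by
    have ht : t < 1 := (fut_mem_Ioo hx hirr (n + 1)).2
    have hr : (1:ℝ) ≤ den x₀ n := by exact_mod_cast one_le_den hx hirr n
    have hrq : (den x₀ n : ℝ) ≤ den x₀ (n + 1) := by exact_mod_cast den_le_den_succ hx hirr n
    exact mul_nonneg (by nlinarith) (prod_fut_pos hx hirr n).le
  have hD := prod_fut_mul_den_add hirr n
  rw [theta_eq_den_mul_prod hx hirr, theta_eq_den_mul_prod hx hirr, prod_range_succ _ (n + 1)]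
  rw [show 1 - 4 * (den x₀ n * P) * (den x₀ (n + 1) * (P * t)) =
      ((den x₀ (n + 1) - den x₀ n * t) * P) ^ 2 by
    linear_combination (-(1 + P * (den x₀ (n + 1) + den x₀ n * t))) * hD]
  exact Real.sqrt_sq hnonneg

theorem stmt16 (x₀ : ℝ) (hx : x₀ ∈ Set.Ioo (0:ℝ) 1) (hirr : Irrational x₀)
    (n : ℕ) (hn : 1 ≤ n) :
    theta x₀ (n + 1) =
      theta x₀ (n - 1) +
        (digit x₀ (n + 1) : ℝ) * Real.sqrt (1 - 4 * theta x₀ (n - 1) * theta x₀ n) -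
        (digit x₀ (n + 1) : ℝ) ^ 2 * theta x₀ n := by
  obtain ⟨m, rfl⟩ : ∃ m, n = m + 1 := ⟨n - 1, by omega⟩
  rw [Nat.add_sub_cancel, sqrt_one_sub_four_mul_theta hx hirr]
  have hq : (den x₀ (m + 2) : ℝ) = digit x₀ (m + 2) * den x₀ (m + 1) + den x₀ m := by
    simp only [den, Int.cast_add, Int.cast_mul]
  simp only [theta_eq_den_mul_prod hx hirr, prod_range_succ _ (m + 2), prod_range_succ _ (m + 1), hq]
  linear_combination (digit x₀ (m + 2) * den x₀ (m + 1) + den x₀ m : ℝ) *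
    (∏ i ∈ range (m + 1), fut x₀ i) * fut_mul_fut_succ hirr (m + 1)
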